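/- Let t be a β(1,0)-tree with root label k, let 1 ≤ i ≤ k, and let λ(i, t) be the β(1,0)-tree obtained from t by joining a new root via an edge to the old root, both the new root and the old root receiving the label i. Then: leaves(λ(i,t)) = leaves(t); root(λ(i,t)) = i; lpath(λ(i,t)) = lpath(t) + 1; rpath(λ(i,t)) = rpath(t) + 1; lsub(λ(i,t)) = lsub(t) + 1 if i = 1 and lsub(λ(i,t)) = lsub(t) if i > 1; stem′(λ(i,t)) = i if i ≤ stem′(t) and stem′(λ(i,t)) = stem′(t) if i > stem′(t). -/

import Mathlib

/-
Common definitions: permutations of {1,…,n} as words (lists), dashed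
pattern avoidance, permutation statistics, and β(1,0)-trees with their
statistics, following the paper
"Decompositions and statistics for β(1,0)-trees and nonseparable permutations".
-/

namespace Beta10

attribute [local instance] Classical.propDecidable

/-- `l` is a permutation of `{1, …, n}` (written as a word). -/
def IsPermOf (n : ℕ) (l : List ℕ) : Prop := l.Perm (List.range' 1 n)

/-- an occurrence of the dashed pattern 3-1-4-2 at positions `i < j < k < m` -/
def occ3142 (l : List ℕ) (i j k m : ℕ) : Prop :=
  i < j ∧ j < k ∧ k < m ∧ m < l.length ∧
  l.getD j 0 < l.getD m 0 ∧ l.getD m 0 < l.getD i 0 ∧ l.getD i 0 < l.getD k 0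

def pat3142 (l : List ℕ) : Prop := ∃ i j k m, occ3142 l i j k m

/-- an occurrence of the dashed pattern 2-41-3 at positions `i < j, j+1 < k` -/
def occ2413 (l : List ℕ) (i j k : ℕ) : Prop :=
  i < j ∧ j + 1 < k ∧ k < l.length ∧
  l.getD (j+1) 0 < l.getD i 0 ∧ l.getD i 0 < l.getD k 0 ∧ l.getD k 0 < l.getD j 0

def pat2413 (l : List ℕ) : Prop := ∃ i j k, occ2413 l i j k

/-- an *avoider*: a permutation of `{1,…,n}` avoiding 3-1-4-2 and 2-41-3 -/
def Avoider (n : ℕ) (l : List ℕ) : Prop := IsPermOf n l ∧ ¬ pat3142 l ∧ ¬ pat2413 l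

/-- direct sum of permutations -/
def dsum (σ τ : List ℕ) : List ℕ := σ ++ τ.map (· + σ.length)

/-- a nonempty permutation that is not a direct sum of two nonempty permutations -/
def Indecomposable (l : List ℕ) : Prop :=
  l ≠ [] ∧ ¬ ∃ σ τ : List ℕ, σ ≠ [] ∧ τ ≠ [] ∧ l = dsum σ τ

/-- position `p` holds a left-to-right maximum of `l` -/
def IsLRMax (l : List ℕ) (p : ℕ) : Prop :=
  p < l.length ∧ ∀ j < p, l.getD j 0 < l.getD p 0

/-- position `p` holds a left-to-right minimum of `l` -/
def IsLRMin (l : List ℕ) (p : ℕ) : Prop :=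
  p < l.length ∧ ∀ j < p, l.getD p 0 < l.getD j 0

/-- position `p` holds a right-to-left maximum of `l` -/
def IsRLMax (l : List ℕ) (p : ℕ) : Prop :=
  p < l.length ∧ ∀ j < l.length, p < j → l.getD j 0 < l.getD p 0

/-- the number of left-to-right maxima -/
noncomputable def lmax (l : List ℕ) : ℕ :=
  ((Finset.range l.length).filter (fun p => IsLRMax l p)).card

/-- the number of left-to-right minima -/
noncomputable def lmin (l : List ℕ) : ℕ :=
  ((Finset.range l.length).filter (fun p => IsLRMin l p)).card

/-- the number of right-to-left maxima -/
noncomputable def rmax (l : List ℕ) : ℕ :=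
  ((Finset.range l.length).filter (fun p => IsRLMax l p)).card

/-- the number of ascents -/
noncomputable def asc (l : List ℕ) : ℕ :=
  ((Finset.range (l.length - 1)).filter (fun p => l.getD p 0 < l.getD (p+1) 0)).card

/-- the number of descents -/
noncomputable def des (l : List ℕ) : ℕ :=
  ((Finset.range (l.length - 1)).filter (fun p => l.getD (p+1) 0 < l.getD p 0)).card

/-- `ldr l` : the largest `i` with `a₁ > a₂ > ⋯ > aᵢ` (and `0` for the empty word) -/
noncomputable def ldr (l : List ℕ) : ℕ :=
  ((Finset.range (l.length + 1)).filter
    (fun i => ∀ j, j + 1 < i → l.getD (j+1) 0 < l.getD j 0)).sup id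

/-- `lir l` : the largest `i` with `a₁ < a₂ < ⋯ < aᵢ` (and `0` for the empty word) -/
noncomputable def lir (l : List ℕ) : ℕ :=
  ((Finset.range (l.length + 1)).filter
    (fun i => ∀ j, j + 1 < i → l.getD j 0 < l.getD (j+1) 0)).sup id

/-- the factor of `l` occupying positions `p, …, q-1` is a component of `l`:
it is nonempty, all letters before it are smaller, all letters after it are
larger, and it admits no nontrivial splitting `αβ` with `α ≺ β`. -/
def IsComponent (l : List ℕ) (p q : ℕ) : Prop :=
  p < q ∧ q ≤ l.length ∧
  (∀ i < p, ∀ j, p ≤ j → j < q → l.getD i 0 < l.getD j 0) ∧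
  (∀ j, p ≤ j → j < q → ∀ i, q ≤ i → i < l.length → l.getD j 0 < l.getD i 0) ∧
  ¬ ∃ r, p < r ∧ r < q ∧ ∀ i, p ≤ i → i < r → ∀ j, r ≤ j → j < q → l.getD i 0 < l.getD j 0

/-- the number of components of `l` -/
noncomputable def comp (l : List ℕ) : ℕ :=
  (((Finset.range (l.length + 1)) ×ˢ (Finset.range (l.length + 1))).filter
    (fun pq => IsComponent l pq.1 pq.2)).card

/-- insert the letter `a` into `l` so that it occupies (0-based) position `r` -/
def insertAt (l : List ℕ) (r : ℕ) (a : ℕ) : List ℕ := l.take r ++ a :: l.drop r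

/-- the (0-based) positions of the left-to-right maxima, from left to right -/
noncomputable def lrMaxPos (l : List ℕ) : List ℕ :=
  (List.range l.length).filter (fun p => decide (IsLRMax l p))

/-- the finite set of avoiders of `{1,…,n}` -/
noncomputable def avoidersFinset (n : ℕ) : Finset (List ℕ) :=
  ((List.range' 1 n).permutations.toFinset).filter (fun l => ¬ pat3142 l ∧ ¬ pat2413 l)

/-- reverse of a permutation -/
def revP (l : List ℕ) : List ℕ := l.reverse

/-- complement of a permutation of `{1,…,n}` -/
def complP (n : ℕ) (l : List ℕ) : List ℕ := l.map (fun a => n + 1 - a)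

/-- inverse of a permutation of `{1,…,n}` (as a word: the `v`-th letter is the
position of the letter `v` in `l`, 1-based) -/
def invP (l : List ℕ) : List ℕ :=
  (List.range' 1 l.length).map (fun v => l.idxOf v + 1)

/-- rooted plane trees with nodes labeled by natural numbers -/
inductive PTree : Type where
  | node : ℕ → List PTree → PTree

namespace PTree

/-- the label of the root -/
def label : PTree → ℕ | node l _ => l

/-- the list of subtrees of the root -/
def children : PTree → List PTree | node _ cs => cs

/-- the number of nodes -/
def size : PTree → ℕ
  | node _ cs => 1 + (cs.attach.map (fun x => size x.1)).sum
decreasing_by have := List.sizeOf_lt_of_mem x.2; simp at this ⊢; omega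

/-- the number of leaves -/
def leaves : PTree → ℕ
  | node _ [] => 1
  | node _ (c :: cs) => ((c :: cs).attach.map (fun x => leaves x.1)).sum
decreasing_by have := List.sizeOf_lt_of_mem x.2; simp at this ⊢; omega

/-- the number of internal (non-leaf) nodes; the root counts as internal -/
def internalN : PTree → ℕ
  | node _ [] => 0
  | node _ (c :: cs) => 1 + ((c :: cs).attach.map (fun x => internalN x.1)).sum
decreasing_by have := List.sizeOf_lt_of_mem x.2; simp at this ⊢; omega

/-- the number of children of the root -/
def subT (t : PTree) : ℕ := t.children.length

/-- the number of edges on the path from the root to the leftmost leaf -/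
def lpath : PTree → ℕ
  | node _ [] => 0
  | node _ (c :: _) => lpath c + 1

mutual
/-- the number of edges on the path from the root to the rightmost leaf -/
def rpath : PTree → ℕ
  | .node _ [] => 0
  | .node _ (c :: cs) => rpathAux c cs + 1
termination_by t => sizeOf t
def rpathAux : PTree → List PTree → ℕ
  | c, [] => rpath c
  | _, c' :: cs => rpathAux c' cs
termination_by c cs => sizeOf c + sizeOf cs
end

/-- the number of nodes with label 1, other than the root, on the path from
the root to the leftmost leaf -/
def lsub : PTree → ℕ
  | node _ [] => 0
  | node _ (c :: _) => lsub c + (if c.label = 1 then 1 else 0)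

mutual
/-- the number of nodes with label 1, other than the root, on the path from
the root to the rightmost leaf -/
def rsub : PTree → ℕ
  | .node _ [] => 0
  | .node _ (c :: cs) => rsubAux c cs
termination_by t => sizeOf t
def rsubAux : PTree → List PTree → ℕ
  | c, [] => rsub c + (if c.label = 1 then 1 else 0)
  | _, c' :: cs => rsubAux c' cs
termination_by c cs => sizeOf c + sizeOf cs
end

/-- the number of internal nodes common to the left path and the right path -/
def stem : PTree → ℕ
  | node _ [] => 0
  | node _ [c] => stem c + 1
  | node _ (_ :: _ :: _) => 1

/-- `tsum u v = u ⊕ v`: the subtrees of the root are those of `u` followed by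
those of `v`, and the root label is the sum of the root labels -/
def tsum (u v : PTree) : PTree := node (u.label + v.label) (u.children ++ v.children)

/-- `lam i t = λ(i, t)`: join a new root via an edge to the old root; both the
new root and the old root get the label `i` -/
def lam (i : ℕ) (t : PTree) : PTree := node i [node i t.children]

/-- the one-edge tree (two nodes, both labeled 1) -/
def edgeT : PTree := node 1 [node 1 []]

/-- `iterEdge k = ⊕^k edgeT`, the `k`-fold sum of one-edge trees -/
def iterEdge : ℕ → PTree
  | 0 => node 0 []
  | k + 1 => tsum edgeT (iterEdge k)

/-- does the path from the root to the leftmost leaf contain a node,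
other than the leaf itself, with label 1? -/
def leftPathOne : PTree → Bool
  | node _ [] => false
  | node l (c :: _) => (l == 1) || leftPathOne c

/-- delete the leftmost leaf and decrease by 1 the labels of all nodes on the
path from the root to it -/
def delLeft : PTree → PTree
  | node l [] => node l []
  | node l (node _ [] :: cs) => node (l - 1) cs
  | node l (c :: cs) => node (l - 1) (delLeft c :: cs)

/-- iterate: if the path from the root to the leftmost leaf contains a node
(other than that leaf) with label 1, stop and report 1 plus the number of
leaves already deleted; otherwise delete the leftmost leaf (decreasing the
labels on its path) and continue -/
def stemGo : ℕ → PTree → ℕ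
  | 0, _ => 0
  | fuel + 1, t => if leftPathOne t then 1 else 1 + stemGo fuel (delLeft t)

/-- the statistic stem′ of the paper: the index of the first leaf (from the
left) whose path to the root contains a node, other than the leaf itself,
with label 1, in the iterated leaf-deletion process -/
def stemP (t : PTree) : ℕ := stemGo t.size t

/-- the mirror image: recursively reverse the order of subtrees -/
def mirror : PTree → PTree
  | node l cs => node l ((cs.attach.map (fun x => mirror x.1)).reverse)
decreasing_by have := List.sizeOf_lt_of_mem x.2; simp at this ⊢; omega

/-- the statistic stem~ : stem′ of the mirror image -/
def stemM (t : PTree) : ℕ := stemP (mirror t)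

/-- `obs u v = u ⊘ v`: identify the rightmost leaf of `u` with the root of `v`;
the identified node gets label 1 -/
def obs : PTree → PTree → PTree
  | node _ [], v => node 1 v.children
  | node l [c], v => node l [obs c v]
  | node l (c :: c' :: cs), v => node l (c :: (obs (node l (c' :: cs)) v).children)
termination_by u _ => sizeOf u
decreasing_by all_goals (simp; try omega)

/-- validity of a non-root node of a β(1,0)-tree (together with all of its
descendants): a leaf has label 1, and any other node has a positive label
that is at most the sum of its children's labels -/
inductive IsBetaSub : PTree → Prop where
  | mk (l : ℕ) (cs : List PTree)
      (hleaf : cs = [] → l = 1)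
      (hinternal : cs ≠ [] → 1 ≤ l ∧ l ≤ (cs.map label).sum)
      (hchildren : ∀ c ∈ cs, IsBetaSub c) : IsBetaSub (node l cs)

end PTree

/-- `t` is a β(1,0)-tree: the root label equals the sum of the children's
labels, and every non-root node is valid -/
def IsBeta (t : PTree) : Prop :=
  t.label = (t.children.map PTree.label).sum ∧ ∀ c ∈ t.children, PTree.IsBetaSub c

end Beta10

/-!
The statistics read off the left and right paths only see one extra edge, labelled `i`.
For stem′, deleting the leftmost leaf of `λ(i, t)` gives `λ(i - 1, t')`, where `t'` comes from
deleting the leftmost leaf of `t`, and the left path of `λ(i, t)` carries a `1` exactly when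
`i = 1` or the left path of `t` does. So the two deletion processes run in lockstep, with `i`
counting down, and `stem′(λ(i, t)) = min i (stem′ t)`. The fuel `size` in `stemP` is harmless:
the process on a β(1,0)-tree stops after at most `label < size` rounds.
-/

namespace Beta10
open PTree

namespace PTree

theorem leaves_lam (i : ℕ) (t : PTree) : (lam i t).leaves = t.leaves := by
  obtain ⟨l, cs⟩ := t
  cases cs <;> simp [lam, leaves, children]

theorem lpath_lam (i : ℕ) (t : PTree) : lpath (lam i t) = lpath t + 1 := by
  obtain ⟨l, cs⟩ := t
  cases cs <;> simp [lam, lpath, children]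

theorem rpath_lam (i : ℕ) (t : PTree) : rpath (lam i t) = rpath t + 1 := by
  obtain ⟨l, cs⟩ := t
  cases cs <;> simp [lam, rpath, rpathAux, children]

theorem lsub_lam_one (t : PTree) : lsub (lam 1 t) = lsub t + 1 := by
  obtain ⟨l, cs⟩ := t
  cases cs <;> simp [lam, lsub, label, children]

theorem lsub_lam_of_ne_one {i : ℕ} (hi : i ≠ 1) (t : PTree) : lsub (lam i t) = lsub t := by
  obtain ⟨l, cs⟩ := t
  cases cs <;> simp [lam, lsub, label, children, hi]

theorem size_lam (i : ℕ) (t : PTree) : (lam i t).size = t.size + 1 := by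
  obtain ⟨l, cs⟩ := t
  simp [lam, size, children]
  omega

theorem leftPathOne_lam {i : ℕ} {t : PTree} (hi1 : 1 ≤ i) (hi2 : i ≤ t.label) :
    leftPathOne (lam i t) = (i == 1 || leftPathOne t) := by
  obtain ⟨l, _ | ⟨c, cs⟩⟩ := t
  · simp [lam, leftPathOne, children]
  · simp only [label] at hi2
    by_cases hl : l = 1
    · simp [lam, leftPathOne, children, hl, show i = 1 by omega]
    · have hl' : (l == 1) = false := by simpa using hl
      simp [lam, leftPathOne, children, hl']

theorem label_ne_one_of_leftPathOne_eq_false {t : PTree} (hne : t.children ≠ [])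
    (hlp : leftPathOne t = false) : t.label ≠ 1 := by
  obtain ⟨l, _ | ⟨c, cs⟩⟩ := t
  · exact absurd rfl hne
  · simp_all [leftPathOne, label]

theorem label_delLeft {t : PTree} (hne : t.children ≠ []) :
    (delLeft t).label = t.label - 1 := by
  obtain ⟨l, _ | ⟨⟨y, _ | ⟨e, es⟩⟩, cs⟩⟩ := t
  · exact absurd rfl hne
  all_goals simp [delLeft, label]

theorem delLeft_lam (i : ℕ) {t : PTree} (hne : t.children ≠ []) :
    delLeft (lam i t) = lam (i - 1) (delLeft t) := by
  obtain ⟨l, _ | ⟨⟨y, _ | ⟨e, es⟩⟩, cs⟩⟩ := t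
  · exact absurd rfl hne
  all_goals simp [lam, delLeft, children]

theorem IsBetaSub.one_le_label {c : PTree} (h : IsBetaSub c) : 1 ≤ c.label := by
  obtain ⟨l, cs, hleaf, hint, -⟩ := h
  rcases eq_or_ne cs [] with hcs | hcs
  · simp [label, hleaf hcs]
  · exact (hint hcs).1

theorem IsBetaSub.label_le_size {c : PTree} (h : IsBetaSub c) : c.label ≤ c.size := by
  induction h with
  | mk l cs hleaf hint _ ih =>
    have hsum : (cs.map label).sum ≤ (cs.map size).sum := List.sum_le_sum ih
    rcases eq_or_ne cs [] with hcs | hcs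
    · simp [label, size, hleaf hcs]
    · have hl := (hint hcs).2
      simp only [label, size, List.attach_map_val] at hl ⊢
      omega

theorem sum_label_children_delLeft (l : ℕ) {d : PTree} (rest : List PTree) (hd : IsBetaSub d) :
    ((delLeft (node l (d :: rest))).children.map label).sum + 1 = ((d :: rest).map label).sum := by
  obtain ⟨y, _ | ⟨e, es⟩⟩ := d
  · obtain ⟨_, _, hleaf, _, _⟩ := hd
    simp [delLeft, children, label, hleaf rfl, add_comm]
  · have hy := hd.one_le_label
    have hdel := label_delLeft (t := node y (e :: es)) (List.cons_ne_nil e es)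
    rw [delLeft.eq_3 _ _ _ (by simp)]
    simp only [children, List.map_cons, List.sum_cons, hdel]
    omega

theorem isBetaSub_of_mem_children_delLeft (l : ℕ) {d : PTree} {rest : List PTree}
    (hd : d.children ≠ [] → IsBetaSub (delLeft d)) (hrest : ∀ c ∈ rest, IsBetaSub c) :
    ∀ c ∈ (delLeft (node l (d :: rest))).children, IsBetaSub c := by
  obtain ⟨y, _ | ⟨e, es⟩⟩ := d
  · simpa [delLeft, children] using hrest
  · rw [delLeft.eq_3 _ _ _ (by simp)]
    simpa [children] using ⟨hd (List.cons_ne_nil e es), hrest⟩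

theorem IsBetaSub.delLeft {c : PTree} (h : IsBetaSub c) (hne : c.children ≠ [])
    (hlp : leftPathOne c = false) : IsBetaSub (PTree.delLeft c) := by
  induction h with
  | mk x cs _ hint hch ih =>
    obtain _ | ⟨d, rest⟩ := cs
    · exact absurd rfl hne
    have hlab := label_delLeft hne
    simp only [leftPathOne, Bool.or_eq_false_iff, beq_eq_false_iff_ne] at hlp
    have hx := hint (List.cons_ne_nil d rest)
    have hsum := sum_label_children_delLeft x rest (hch d List.mem_cons_self)
    have hval := isBetaSub_of_mem_children_delLeft x
      (fun hd => ih d List.mem_cons_self hd hlp.2) (fun c hc => hch c (List.mem_cons_of_mem _ hc))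
    generalize PTree.delLeft (node x (d :: rest)) = t' at hlab hsum hval
    obtain ⟨x', cs'⟩ := t'
    simp only [label, children] at hlab hsum hval hx
    refine ⟨x', cs', fun h => ?_, fun _ => ⟨by omega, by omega⟩, hval⟩
    simp only [h, List.map_nil, List.sum_nil] at hsum
    omega

theorem stemGo_succ (n : ℕ) (t : PTree) :
    stemGo (n + 1) t = if leftPathOne t then 1 else 1 + stemGo n (delLeft t) := rfl

theorem stemGo_succ_of_lt {n : ℕ} {t : PTree} (h : stemGo n t < n) :
    stemGo (n + 1) t = stemGo n t := by
  induction n generalizing t with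
  | zero => exact absurd h (Nat.not_lt_zero _)
  | succ n ih =>
    rw [stemGo_succ (n + 1) t, stemGo_succ n t]
    rw [stemGo_succ] at h
    cases hlp : leftPathOne t with
    | true => rfl
    | false =>
      simp only [hlp, Bool.false_eq_true, if_false] at h ⊢
      rw [ih (by omega)]

end PTree

theorem IsBeta.children_ne_nil {t : PTree} (hb : IsBeta t) (h : t.label ≠ 0) :
    t.children ≠ [] := by
  intro hcs
  exact h (by simpa [hcs] using hb.1)

theorem IsBeta.label_lt_size {t : PTree} (hb : IsBeta t) : t.label < t.size := by
  obtain ⟨l, cs⟩ := t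
  obtain ⟨hl, hch⟩ := hb
  have hsum : (cs.map label).sum ≤ (cs.map size).sum :=
    List.sum_le_sum fun c hc => (hch c hc).label_le_size
  simp only [label, children, size, List.attach_map_val] at hl hsum ⊢
  omega

theorem IsBeta.delLeft {t : PTree} (hb : IsBeta t) (hne : t.children ≠ [])
    (hlp : leftPathOne t = false) : IsBeta (PTree.delLeft t) := by
  obtain ⟨l, _ | ⟨d, rest⟩⟩ := t
  · exact absurd rfl hne
  obtain ⟨hl, hch⟩ := hb
  simp only [leftPathOne, Bool.or_eq_false_iff] at hlp
  have hd := hch d List.mem_cons_self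
  refine ⟨?_, isBetaSub_of_mem_children_delLeft l (fun hne' => hd.delLeft hne' hlp.2)
    fun c hc => hch c (List.mem_cons_of_mem _ hc)⟩
  have hsum := sum_label_children_delLeft l rest hd
  rw [label_delLeft hne]
  simp only [label, children] at hl hsum ⊢
  omega

theorem IsBeta.stemGo_le_label {t : PTree} (hb : IsBeta t) (ht : 1 ≤ t.label) (n : ℕ) :
    stemGo n t ≤ t.label := by
  induction n generalizing t with
  | zero => exact Nat.zero_le _
  | succ n ih =>
    rw [stemGo_succ]
    cases hlp : leftPathOne t with
    | true => exact ht
    | false =>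
      have hne := hb.children_ne_nil (by omega)
      have h1 := label_ne_one_of_leftPathOne_eq_false hne hlp
      have hdel := label_delLeft hne
      have := ih (hb.delLeft hne hlp) (by omega)
      simp only [Bool.false_eq_true, if_false]
      omega

theorem IsBeta.stemGo_lam {t : PTree} {i : ℕ} (hb : IsBeta t) (hi1 : 1 ≤ i) (hi2 : i ≤ t.label)
    (n : ℕ) : stemGo n (lam i t) = min i (stemGo n t) := by
  induction n generalizing t i with
  | zero => simp [stemGo]
  | succ n ih =>
    rw [stemGo_succ, stemGo_succ, leftPathOne_lam hi1 hi2]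
    cases hlp : leftPathOne t with
    | true => simp only [Bool.or_true, if_true]; omega
    | false =>
      by_cases hi : i = 1
      · simp [hi]
      have hne := hb.children_ne_nil (by omega)
      have hdel := label_delLeft hne
      have := ih (hb.delLeft hne hlp) (i := i - 1) (by omega) (by omega)
      simp only [hi, beq_iff_eq, Bool.or_false, Bool.false_eq_true, if_false,
        delLeft_lam i hne, this]
      omega

theorem IsBeta.stemP_lam {t : PTree} {i : ℕ} (hb : IsBeta t) (hi1 : 1 ≤ i) (hi2 : i ≤ t.label) :
    stemP (lam i t) = min i (stemP t) := by
  have hlt : stemGo t.size t < t.size :=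
    (hb.stemGo_le_label (by omega) _).trans_lt hb.label_lt_size
  rw [stemP, stemP, size_lam, hb.stemGo_lam hi1 hi2, stemGo_succ_of_lt hlt]

/-- Statistics of `λ(i, t)` for a β(1,0)-tree `t` with root
label `k` and `1 ≤ i ≤ k`. -/
theorem statement_10 (t : PTree) (k i : ℕ) (hb : IsBeta t) (hk : t.label = k)
    (hi1 : 1 ≤ i) (hi2 : i ≤ k) :
    (lam i t).leaves = t.leaves ∧
    (lam i t).label = i ∧
    lpath (lam i t) = lpath t + 1 ∧
    rpath (lam i t) = rpath t + 1 ∧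
    (i = 1 → lsub (lam i t) = lsub t + 1) ∧
    (1 < i → lsub (lam i t) = lsub t) ∧
    (i ≤ stemP t → stemP (lam i t) = i) ∧
    (stemP t < i → stemP (lam i t) = stemP t) := by
  subst hk
  have hstem := hb.stemP_lam hi1 hi2
  refine ⟨leaves_lam i t, rfl, lpath_lam i t, rpath_lam i t, ?_, ?_, ?_, ?_⟩
  · rintro rfl
    exact lsub_lam_one t
  · exact fun h => lsub_lam_of_ne_one h.ne' t
  · exact fun h => hstem.trans (min_eq_left h)
  · exact fun h => hstem.trans (min_eq_right h.le)

end Beta10
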